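/- arXiv:2602.10599 — 5 statements merged into one kernel-verified Lean document; each statement's English description precedes it below -/
import Mathlib

section
/- Let μ > 0. The sequence of functions (a_{n+1})_n converges uniformly on [0,1] to the identity function e_1(x) = x, i.e., sup_{x ∈ [0,1]} |a_{n+1}(x) − x| → 0 as n → +∞. -/
/-! Put `t = 1 / ((n + 1)(1 + μ))`, so that `a_{n+1}(x) = log (1 + x t) / log (1 + t)`. Bernoulli's
inequality `(1 + t)^x ≤ 1 + x t` gives `a_{n+1}(x) ≥ x`, while `log (1 + x t) ≤ x t` and
`log (1 + t) ≥ t / (1 + t)` give `a_{n+1}(x) ≤ x (1 + t)`. Hence the supremum is at most `t → 0`. -/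

open MeasureTheory Filter Set

/-- The logarithmic weight `ln_μ(x) = ln(1+μ+x)`. -/
noncomputable def lnMu (μ x : ℝ) : ℝ := Real.log (1 + μ + x)

/-- The function `a_{n+1}(x)` from the paper. -/
noncomputable def aFun (μ : ℝ) (n : ℕ) (x : ℝ) : ℝ :=
  Real.log (1 + x / (((n : ℝ) + 1) * (1 + μ))) /
    Real.log (1 + 1 / (((n : ℝ) + 1) * (1 + μ)))

/-- Bernstein basis polynomial `p_{n,k}(x) = C(n,k) x^k (1-x)^{n-k}`. -/
noncomputable def bern (n k : ℕ) (x : ℝ) : ℝ :=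
  (n.choose k : ℝ) * x ^ k * (1 - x) ^ (n - k)

/-- The Kantorovich logarithmic operator `𝓛ₙᴷ(f,x)`. -/
noncomputable def LK (μ : ℝ) (n : ℕ) (f : ℝ → ℝ) (x : ℝ) : ℝ :=
  lnMu μ x * ∑ k ∈ Finset.range (n + 1),
    bern n k (aFun μ n x) * ((n : ℝ) + 1) *
      ∫ t in ((k : ℝ) / ((n : ℝ) + 1))..(((k : ℝ) + 1) / ((n : ℝ) + 1)), f t / lnMu μ t

/-- `γ_n := max_{x ∈ [0,1]} |a_{n+1}(x) - x|`. -/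
noncomputable def gammaN (μ : ℝ) (n : ℕ) : ℝ :=
  ⨆ x : Set.Icc (0 : ℝ) 1, |aFun μ n (x : ℝ) - (x : ℝ)|

/-- Unweighted L^p norm `(∫₀¹ |f|^p)^(1/p)` on [0,1]. -/
noncomputable def normP (p : ℝ) (f : ℝ → ℝ) : ℝ :=
  (∫ x in (0:ℝ)..1, |f x| ^ p) ^ (1 / p)

/-- Weighted L^p norm `(∫₀¹ |f/ln_μ|^p)^(1/p)` on [0,1]. -/
noncomputable def normPMu (μ p : ℝ) (f : ℝ → ℝ) : ℝ :=
  (∫ x in (0:ℝ)..1, |f x / lnMu μ x| ^ p) ^ (1 / p)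

lemma mul_log_one_add_le_log_one_add_mul {t x : ℝ} (ht : -1 < t) (hx₀ : 0 ≤ x) (hx₁ : x ≤ 1) :
    x * Real.log (1 + t) ≤ Real.log (1 + x * t) := by
  have h1t : 0 < 1 + t := by linarith
  rw [← Real.log_rpow h1t]
  exact Real.log_le_log (Real.rpow_pos_of_pos h1t x)
    (rpow_one_add_le_one_add_mul_self ht.le hx₀ hx₁)

lemma le_one_add_mul_log_one_add {t : ℝ} (ht : -1 < t) : t ≤ (1 + t) * Real.log (1 + t) := by
  have h1t : 0 < 1 + t := by linarith
  have h := mul_le_mul_of_nonneg_left (Real.one_sub_inv_le_log_of_pos h1t) h1t.le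
  rwa [mul_sub, mul_one, mul_inv_cancel₀ h1t.ne', add_sub_cancel_left] at h

lemma abs_log_one_add_mul_div_log_one_add_sub_le {t x : ℝ} (ht : 0 < t) (hx₀ : 0 ≤ x)
    (hx₁ : x ≤ 1) : |Real.log (1 + x * t) / Real.log (1 + t) - x| ≤ t := by
  have hlog : 0 < Real.log (1 + t) := Real.log_pos (by linarith)
  have hlower : x ≤ Real.log (1 + x * t) / Real.log (1 + t) := by
    rw [le_div_iff₀ hlog]
    exact mul_log_one_add_le_log_one_add_mul (by linarith) hx₀ hx₁
  have hupper : Real.log (1 + x * t) / Real.log (1 + t) ≤ x * (1 + t) := by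
    rw [div_le_iff₀ hlog]
    calc Real.log (1 + x * t) ≤ x * t := by
          linarith [Real.log_le_sub_one_of_pos (x := 1 + x * t) (by positivity)]
      _ ≤ x * ((1 + t) * Real.log (1 + t)) :=
          mul_le_mul_of_nonneg_left (le_one_add_mul_log_one_add (by linarith)) hx₀
      _ = x * (1 + t) * Real.log (1 + t) := by ring
  rw [abs_sub_le_iff]
  constructor <;> nlinarith

lemma abs_aFun_sub_le {μ : ℝ} (hμ : -1 < μ) (n : ℕ) {x : ℝ} (hx₀ : 0 ≤ x) (hx₁ : x ≤ 1) :
    |aFun μ n x - x| ≤ 1 / (((n : ℝ) + 1) * (1 + μ)) := by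
  have h := abs_log_one_add_mul_div_log_one_add_sub_le
    (one_div_pos.2 (mul_pos n.cast_add_one_pos (neg_lt_iff_pos_add'.1 hμ))) hx₀ hx₁
  rwa [mul_one_div] at h

lemma tendsto_one_div_natCast_add_one_mul_nhds_zero {c : ℝ} (hc : 0 < c) :
    Tendsto (fun n : ℕ => 1 / (((n : ℝ) + 1) * c)) atTop (nhds 0) := by
  simp only [one_div]
  exact tendsto_inv_atTop_zero.comp
    (tendsto_natCast_atTop_atTop.atTop_add tendsto_const_nhds |>.atTop_mul_const hc)

theorem stmt1 (μ : ℝ) (hμ : 0 < μ) :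
    Tendsto (fun n : ℕ => ⨆ x : Set.Icc (0:ℝ) 1, |aFun μ n (x : ℝ) - (x : ℝ)|)
      atTop (nhds 0) := by
  have hbound : ∀ n : ℕ, ⨆ x : Set.Icc (0:ℝ) 1, |aFun μ n (x : ℝ) - (x : ℝ)|
      ≤ 1 / (((n : ℝ) + 1) * (1 + μ)) := fun n =>
    Real.iSup_le (fun x => abs_aFun_sub_le (by linarith) n x.2.1 x.2.2) (by positivity)
  exact tendsto_of_tendsto_of_tendsto_of_le_of_le tendsto_const_nhds
    (tendsto_one_div_natCast_add_one_mul_nhds_zero (by linarith))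
    (fun n => Real.iSup_nonneg fun _ => abs_nonneg _) hbound
end

section
/- Let μ > 0. For every x ∈ [0,1], lim_{n → +∞} n (a_{n+1}(x) − x) = (x − x²)/(2(1+μ)). -/
open MeasureTheory Filter Set

/-! With `t = 1 / ((n + 1)(1 + μ))` we have `a_{n+1}(x) = log (1 + x t) / log (1 + t)`. By
L'Hôpital, `log (1 + x t) - x log (1 + t) = (x - x²) t² / 2 + o(t²)` (its derivative is
`x (1 - x) t / ((1 + x t)(1 + t))`), and `log (1 + t) ~ t`; hence `a_{n+1}(x) - x ~ (x - x²) t / 2`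
and `n t → 1 / (1 + μ)`. -/

open Real Topology

lemma eventually_one_add_mul_pos (x : ℝ) : ∀ᶠ t in 𝓝 (0 : ℝ), 0 < 1 + x * t := by
  have h : ContinuousAt (fun t : ℝ => 1 + x * t) 0 := by fun_prop
  exact h.eventually (lt_mem_nhds (by simp))

lemma hasDerivAt_log_one_add_mul {x t : ℝ} (ht : 0 < 1 + x * t) :
    HasDerivAt (fun s => log (1 + x * s)) (x / (1 + x * t)) t := by
  simpa using (((hasDerivAt_id t).const_mul x).const_add 1).log ht.ne'

lemma hasDerivAt_log_one_add_mul_sub_mul_log {x t : ℝ} (hxt : 0 < 1 + x * t) (ht : 0 < 1 + t) :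
    HasDerivAt (fun s => log (1 + x * s) - x * log (1 + s)) (x / (1 + x * t) - x / (1 + t)) t := by
  have h := (hasDerivAt_log_one_add_mul hxt).fun_sub
    ((hasDerivAt_log_one_add_mul (x := 1) (by simpa using ht)).const_mul x)
  simpa only [one_mul, mul_one_div] using h

lemma tendsto_log_one_add_mul_sub_mul_log_div_sq (x : ℝ) :
    Tendsto (fun t => (log (1 + x * t) - x * log (1 + t)) / t ^ 2) (𝓝[>] 0)
      (𝓝 ((x - x ^ 2) / 2)) := by
  have hpos : ∀ᶠ t in 𝓝[>] (0 : ℝ), 0 < 1 + x * t ∧ 0 < 1 + t := by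
    filter_upwards [nhdsWithin_le_nhds (eventually_one_add_mul_pos x), self_mem_nhdsWithin]
      with t hxt (ht : 0 < t)
    exact ⟨hxt, by linarith⟩
  have hquot : Tendsto (fun t => x * (1 - x) / (2 * ((1 + x * t) * (1 + t)))) (𝓝[>] 0)
      (𝓝 ((x - x ^ 2) / 2)) := by
    have : ContinuousAt (fun t => x * (1 - x) / (2 * ((1 + x * t) * (1 + t)))) 0 :=
      ContinuousAt.div (by fun_prop) (by fun_prop) (by simp)
    convert this.tendsto.mono_left nhdsWithin_le_nhds using 2
    simp only [mul_zero, add_zero, mul_one]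
    ring
  refine HasDerivAt.lhopital_zero_nhdsGT (f' := fun t => x / (1 + x * t) - x / (1 + t))
    (g' := fun t => 2 * t) ?_ ?_ ?_ ?_ ?_ (hquot.congr' ?_)
  · filter_upwards [hpos] with t ⟨hx, h1⟩
    exact hasDerivAt_log_one_add_mul_sub_mul_log hx h1
  · exact Eventually.of_forall fun t => by simpa using hasDerivAt_pow 2 t
  · filter_upwards [self_mem_nhdsWithin] with t (ht : 0 < t)
    positivity
  · have h0 := hasDerivAt_log_one_add_mul_sub_mul_log (x := x) (t := 0) (by simp) (by simp)
    simpa using h0.continuousAt.tendsto.mono_left nhdsWithin_le_nhds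
  · exact ((continuous_pow 2).tendsto' 0 0 (by simp)).mono_left nhdsWithin_le_nhds
  · filter_upwards [hpos, self_mem_nhdsWithin] with t ⟨hx, h1⟩ (ht : 0 < t)
    field_simp
    ring

lemma tendsto_div_log_one_add : Tendsto (fun t => t / log (1 + t)) (𝓝[>] 0) (𝓝 1) := by
  have hslope := hasDerivAt_iff_tendsto_slope.mp
    (hasDerivAt_log_one_add_mul (x := 1) (t := 0) (by simp))
  have hIoi : Ioi (0 : ℝ) ⊆ {0}ᶜ := fun t (ht : 0 < t) => ht.ne'
  simpa [slope_def_field] using (hslope.mono_left (nhdsWithin_mono 0 hIoi)).inv₀ (by simp)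

lemma tendsto_log_one_add_mul_div_log_one_add_sub_div (x : ℝ) :
    Tendsto (fun t => (log (1 + x * t) / log (1 + t) - x) / t) (𝓝[>] 0)
      (𝓝 ((x - x ^ 2) / 2)) := by
  have h := (tendsto_log_one_add_mul_sub_mul_log_div_sq x).mul tendsto_div_log_one_add
  rw [mul_one] at h
  refine h.congr' ?_
  filter_upwards [self_mem_nhdsWithin] with t (ht : 0 < t)
  have hlog : log (1 + t) ≠ 0 := (log_pos (by linarith)).ne'
  field_simp

theorem stmt2_general (μ : ℝ) (hμ : 0 < μ) (x : ℝ) :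
    Tendsto (fun n : ℕ => (n : ℝ) * (aFun μ n x - x)) atTop
      (nhds ((x - x ^ 2) / (2 * (1 + μ)))) := by
  set t : ℕ → ℝ := fun n => 1 / (((n : ℝ) + 1) * (1 + μ)) with ht_def
  have ht_pos : ∀ n, 0 < t n := fun n => by positivity
  have ht_lim : Tendsto t atTop (𝓝[>] 0) := by
    refine tendsto_nhdsWithin_of_tendsto_nhds_of_eventually_within _ ?_
      (Eventually.of_forall ht_pos)
    have := tendsto_one_div_add_atTop_nhds_zero_nat.div_const (1 + μ)
    rw [zero_div] at this
    exact this.congr fun n => by rw [ht_def, div_div]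
  have hnt_lim : Tendsto (fun n : ℕ => n * t n) atTop (𝓝 (1 / (1 + μ))) := by
    have := (tendsto_natCast_div_add_atTop (1 : ℝ)).div_const (1 + μ)
    refine this.congr fun n => ?_
    simp only [ht_def]
    field_simp
  have h := hnt_lim.mul ((tendsto_log_one_add_mul_div_log_one_add_sub_div x).comp ht_lim)
  convert h using 2 with n
  · rw [Function.comp_apply, mul_assoc, mul_div_cancel₀ _ (ht_pos n).ne', ht_def, aFun,
      mul_one_div]
  · field_simp

theorem stmt2 (μ : ℝ) (hμ : 0 < μ) (x : ℝ) (hx : x ∈ Set.Icc (0:ℝ) 1) :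
    Tendsto (fun n : ℕ => (n : ℝ) * (aFun μ n x - x)) atTop
      (nhds ((x - x ^ 2) / (2 * (1 + μ)))) :=
  stmt2_general μ hμ x
end

section
/- Let μ > 0 and let f : [0,1] → ℝ be continuous. Then 𝓛ₙᴷ f converges to f uniformly on [0,1], i.e., sup_{x ∈ [0,1]} |𝓛ₙᴷ(f, x) − f(x)| → 0 as n → +∞. -/
/-!
With `g = f / ln_μ` the operator factors as `𝓛ₙᴷ(f, x) = ln_μ(x) · Kₙ(g, a_{n+1}(x))`, where `Kₙ` is
the classical Kantorovich operator on `[0,1]`. `Kₙ g → g` uniformly: each cell mean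
`(n+1) ∫_{k/(n+1)}^{(k+1)/(n+1)} g` is uniformly close to `g(k/n)`, and the Bernstein polynomials
of `g` converge uniformly. The bounds `t/(c+t) ≤ log(1 + t/c) ≤ t/c` give
`|a_{n+1}(x) - x| ≤ 1/((n+1)(1+μ))`, so by uniform continuity of `g`, `Kₙ(g, a_{n+1}(x)) → g(x)`
uniformly, and multiplying by the bounded weight `ln_μ` preserves this.
-/

open MeasureTheory Filter Set

section UniformConvergence

variable {ι α β γ : Type*} {l : Filter ι} {s : Set α}

theorem tendstoUniformlyOn_of_dist_le [PseudoMetricSpace β] {F : ι → α → β} {f : α → β}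
    {u : ι → ℝ} (hu : Tendsto u l (nhds 0)) (h : ∀ i, ∀ x ∈ s, dist (f x) (F i x) ≤ u i) :
    TendstoUniformlyOn F f l s := by
  refine Metric.tendstoUniformlyOn_iff.mpr fun ε hε => ?_
  filter_upwards [hu.eventually (gt_mem_nhds hε)] with i hi x hx
  exact (h i x hx).trans_lt hi

theorem TendstoUniformlyOn.comp_of_mapsTo [UniformSpace β] {t : Set γ} {F : ι → α → β}
    {f : α → β} {g : γ → β} {a : ι → γ → α} (hF : TendstoUniformlyOn F f l s)
    (ha : ∀ i, MapsTo (a i) t s) (hf : TendstoUniformlyOn (fun i x => f (a i x)) g l t) :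
    TendstoUniformlyOn (fun i x => F i (a i x)) g l t := by
  intro u hu
  obtain ⟨v, hv, hvu⟩ := comp_mem_uniformity_sets hu
  filter_upwards [hF v hv, hf v hv] with i hFi hfi x hx
  exact hvu ⟨f (a i x), hfi x hx, hFi (a i x) (ha i hx)⟩

theorem TendstoUniformlyOn.mul_left_of_norm_le [SeminormedRing β] {F : ι → α → β}
    {f w : α → β} {M : ℝ} (h : TendstoUniformlyOn F f l s) (hw : ∀ x ∈ s, ‖w x‖ ≤ M) :
    TendstoUniformlyOn (fun i x => w x * F i x) (fun x => w x * f x) l s := by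
  refine Metric.tendstoUniformlyOn_iff.mpr fun ε hε => ?_
  have hM : 0 < |M| + 1 := by positivity
  filter_upwards [Metric.tendstoUniformlyOn_iff.mp h (ε / (|M| + 1)) (by positivity)]
    with i hi x hx
  calc dist (w x * f x) (w x * F i x) = ‖w x * (f x - F i x)‖ := by
        rw [dist_eq_norm, mul_sub]
    _ ≤ (|M| + 1) * dist (f x) (F i x) := by
        rw [dist_eq_norm]
        refine (norm_mul_le _ _).trans (mul_le_mul_of_nonneg_right ?_ (norm_nonneg _))
        linarith [hw x hx, le_abs_self M]
    _ < ε := by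
        rw [← lt_div_iff₀' hM]
        exact hi x hx

theorem tendsto_iSup_abs_sub_of_tendstoUniformlyOn {F : ι → α → ℝ} {f : α → ℝ}
    (h : TendstoUniformlyOn F f l s) :
    Tendsto (fun i => ⨆ x : s, |F i x - f x|) l (nhds 0) := by
  refine Metric.tendsto_nhds.mpr fun ε hε => ?_
  filter_upwards [Metric.tendstoUniformlyOn_iff.mp h (ε / 2) (by positivity)] with i hi
  have hsup : (⨆ x : s, |F i x - f x|) ≤ ε / 2 :=
    Real.iSup_le (fun x => by simpa [Real.dist_eq, abs_sub_comm] using (hi x x.2).le)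
      (by positivity)
  rw [Real.dist_eq, sub_zero, abs_of_nonneg (Real.iSup_nonneg fun _ => abs_nonneg _)]
  linarith

end UniformConvergence

section Bernstein

variable {n : ℕ} {y : ℝ}

theorem sum_bern_eq_one (n : ℕ) (y : ℝ) : ∑ k ∈ Finset.range (n + 1), bern n k y = 1 := by
  have h := (add_pow y (1 - y) n).symm
  rw [add_sub_cancel, one_pow] at h
  rw [← h]
  exact Finset.sum_congr rfl fun k _ => by rw [bern]; ring

theorem bern_nonneg (k : ℕ) (hy : y ∈ Icc (0 : ℝ) 1) : 0 ≤ bern n k y := by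
  have : 0 ≤ 1 - y := sub_nonneg.mpr hy.2
  have := hy.1
  unfold bern
  positivity

theorem abs_sum_bern_mul_le {c : ℕ → ℝ} {ε : ℝ} (hy : y ∈ Icc (0 : ℝ) 1)
    (hc : ∀ k ≤ n, |c k| ≤ ε) : |∑ k ∈ Finset.range (n + 1), bern n k y * c k| ≤ ε :=
  calc |∑ k ∈ Finset.range (n + 1), bern n k y * c k|
      ≤ ∑ k ∈ Finset.range (n + 1), bern n k y * ε := by
        refine (Finset.abs_sum_le_sum_abs _ _).trans (Finset.sum_le_sum fun k hk => ?_)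
        rw [abs_mul, abs_of_nonneg (bern_nonneg k hy)]
        exact mul_le_mul_of_nonneg_left (hc k (Nat.lt_succ_iff.mp (Finset.mem_range.mp hk)))
          (bern_nonneg k hy)
    _ = ε := by rw [← Finset.sum_mul, sum_bern_eq_one, one_mul]

theorem tendstoUniformlyOn_bernstein {g : ℝ → ℝ} (hg : ContinuousOn g (Icc 0 1)) :
    TendstoUniformlyOn (fun n y => ∑ k ∈ Finset.range (n + 1), bern n k y * g (k / n)) g
      atTop (Icc 0 1) := by
  let G : C(unitInterval, ℝ) := ⟨(Icc (0 : ℝ) 1).domRestrict g, hg.domRestrict⟩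
  have h := ContinuousMap.tendsto_iff_tendstoUniformly.mp (bernsteinApproximation_uniform G)
  refine tendstoUniformlyOn_iff_restrict.mpr
    ((tendstoUniformly_congr (.of_forall fun n => funext fun y => ?_)).mp h)
  rw [bernsteinApproximation.apply, Set.domRestrict_apply, ← Fin.sum_univ_eq_sum_range]
  refine Finset.sum_congr rfl fun k _ => ?_
  rw [bernstein_apply, smul_eq_mul]
  rfl

end Bernstein

section Kantorovich

noncomputable def kantorovich (n : ℕ) (g : ℝ → ℝ) (y : ℝ) : ℝ :=
  ∑ k ∈ Finset.range (n + 1), bern n k y *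
    (((n : ℝ) + 1) * ∫ t in (k : ℝ) / ((n : ℝ) + 1)..((k : ℝ) + 1) / ((n : ℝ) + 1), g t)

theorem abs_inv_mul_integral_sub_le {g : ℝ → ℝ} {a b c ε : ℝ} (hab : a < b)
    (hg : IntervalIntegrable g volume a b) (h : ∀ t ∈ Icc a b, |g t - c| ≤ ε) :
    |(b - a)⁻¹ * (∫ t in a..b, g t) - c| ≤ ε := by
  have hba : 0 < b - a := sub_pos.mpr hab
  have hint : ‖∫ t in a..b, (g t - c)‖ ≤ ε * |b - a| :=
    intervalIntegral.norm_integral_le_of_norm_le_const fun t ht =>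
      h t (Ioc_subset_Icc_self (uIoc_of_le hab.le ▸ ht))
  rw [Real.norm_eq_abs, intervalIntegral.integral_sub hg intervalIntegrable_const, intervalIntegral.integral_const,
    smul_eq_mul, abs_of_pos hba] at hint
  calc |(b - a)⁻¹ * (∫ t in a..b, g t) - c|
      = (b - a)⁻¹ * |(∫ t in a..b, g t) - (b - a) * c| := by
        rw [← abs_of_pos (inv_pos.mpr hba), ← abs_mul, abs_of_pos (inv_pos.mpr hba), mul_sub,
          inv_mul_cancel_left₀ hba.ne']
    _ ≤ ε := by rwa [inv_mul_le_iff₀ hba, mul_comm (b - a) ε]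

variable {n k : ℕ}

theorem Icc_cell_subset_Icc (hk : k ≤ n) :
    Icc ((k : ℝ) / ((n : ℝ) + 1)) (((k : ℝ) + 1) / ((n : ℝ) + 1)) ⊆ Icc 0 1 := by
  have hk' : (k : ℝ) + 1 ≤ n + 1 := by exact_mod_cast Nat.succ_le_succ hk
  exact Icc_subset_Icc (by positivity) ((div_le_one (by positivity)).mpr hk')

theorem abs_sub_div_le_of_mem_Icc_cell {t : ℝ} (hn : 0 < n) (hk : k ≤ n)
    (ht : t ∈ Icc ((k : ℝ) / ((n : ℝ) + 1)) (((k : ℝ) + 1) / ((n : ℝ) + 1))) :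
    |t - k / n| ≤ 1 / ((n : ℝ) + 1) := by
  have hn' : (0 : ℝ) < n := by exact_mod_cast hn
  have hk' : (k : ℝ) ≤ n := by exact_mod_cast hk
  have hlow : (k : ℝ) / (n + 1) ≤ k / n := div_le_div_of_nonneg_left k.cast_nonneg hn' (by linarith)
  have hup : (k : ℝ) / n ≤ (k + 1) / (n + 1) := by
    rw [div_le_div_iff₀ hn' (by positivity)]
    linarith
  have hlen : ((k : ℝ) + 1) / (n + 1) - k / (n + 1) = 1 / (n + 1) := by ring
  rw [abs_sub_le_iff]
  constructor <;> linarith [ht.1, ht.2]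

theorem tendstoUniformlyOn_kantorovich {g : ℝ → ℝ} (hg : ContinuousOn g (Icc 0 1)) :
    TendstoUniformlyOn (fun n => kantorovich n g) g atTop (Icc 0 1) := by
  refine Metric.tendstoUniformlyOn_iff.mpr fun ε hε => ?_
  obtain ⟨δ, hδ, hgδ⟩ := Metric.uniformContinuousOn_iff_le.mp
    (isCompact_Icc.uniformContinuousOn_of_continuous hg) (ε / 2) (by positivity)
  filter_upwards [Metric.tendstoUniformlyOn_iff.mp (tendstoUniformlyOn_bernstein hg) (ε / 2)
      (by positivity), eventually_gt_atTop 0,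
      tendsto_one_div_add_atTop_nhds_zero_nat.eventually (gt_mem_nhds hδ)] with n hB hn hnδ y hy
  have hcell : ∀ k ≤ n, |((n : ℝ) + 1) *
      (∫ t in (k : ℝ) / ((n : ℝ) + 1)..((k : ℝ) + 1) / ((n : ℝ) + 1), g t) - g (k / n)| ≤ ε / 2 := by
    intro k hk
    have hlen : (((k : ℝ) + 1) / ((n : ℝ) + 1) - k / ((n : ℝ) + 1))⁻¹ = (n : ℝ) + 1 := by
      field_simp; ring
    have hkn : (k : ℝ) / n ∈ Icc 0 1 :=
      ⟨by positivity, (div_le_one (by exact_mod_cast hn)).mpr (by exact_mod_cast hk)⟩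
    have hmean := abs_inv_mul_integral_sub_le (c := g (k / n)) (ε := ε / 2) (by gcongr; linarith)
      ((hg.mono (Icc_cell_subset_Icc hk)).intervalIntegrable_of_Icc (by gcongr; linarith))
      fun t ht => by
        rw [← Real.dist_eq]
        refine hgδ t (Icc_cell_subset_Icc hk ht) _ hkn ?_
        rw [Real.dist_eq]
        exact (abs_sub_div_le_of_mem_Icc_cell hn hk ht).trans hnδ.le
    rwa [hlen] at hmean
  have hKB : dist (∑ k ∈ Finset.range (n + 1), bern n k y * g (k / n)) (kantorovich n g y)
      ≤ ε / 2 := by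
    rw [Real.dist_eq, abs_sub_comm, kantorovich, ← Finset.sum_sub_distrib]
    simp_rw [← mul_sub]
    exact abs_sum_bern_mul_le hy hcell
  linarith [dist_triangle (g y) (∑ k ∈ Finset.range (n + 1), bern n k y * g (k / n))
    (kantorovich n g y), hB y hy]

end Kantorovich

section Logarithmic

theorem abs_log_div_log_sub_le {c x : ℝ} (hc : 0 < c) (hx : x ∈ Icc (0 : ℝ) 1) :
    |Real.log (1 + x / c) / Real.log (1 + 1 / c) - x| ≤ 1 / c := by
  obtain ⟨hx0, hx1⟩ := hx
  have hlog : ∀ t : ℝ, 0 ≤ t → t / (c + t) ≤ Real.log (1 + t / c) ∧ Real.log (1 + t / c) ≤ t / c :=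
    fun t ht => by
      have h : 0 < 1 + t / c := by positivity
      have hinv : 1 - (1 + t / c)⁻¹ = t / (c + t) := by field_simp; ring
      exact ⟨hinv ▸ Real.one_sub_inv_le_log_of_pos h, by linarith [Real.log_le_sub_one_of_pos h]⟩
  obtain ⟨hN₁, hN₂⟩ := hlog x hx0
  obtain ⟨hD₁, hD₂⟩ := hlog 1 zero_le_one
  have hD : 0 < Real.log (1 + 1 / c) := (by positivity : (0 : ℝ) < 1 / (c + 1)).trans_le hD₁
  rw [abs_sub_le_iff]
  constructor
  · rw [sub_le_iff_le_add, div_le_iff₀ hD]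
    calc Real.log (1 + x / c) ≤ x / c := hN₂
      _ ≤ (1 / c + x) * (1 / (c + 1)) := by
        rw [div_le_iff₀ hc, mul_comm, ← mul_assoc, mul_one_div, mul_add, mul_one_div_cancel hc.ne',
          le_div_iff₀ (by positivity)]
        nlinarith
      _ ≤ (1 / c + x) * Real.log (1 + 1 / c) := by gcongr
  · have hlow : x * c / (c + x) ≤ Real.log (1 + x / c) / Real.log (1 + 1 / c) :=
      calc x * c / (c + x) = (x / (c + x)) / (1 / c) := by field_simp
        _ ≤ Real.log (1 + x / c) / Real.log (1 + 1 / c) :=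
          div_le_div₀ ((by positivity : (0 : ℝ) ≤ x / (c + x)).trans hN₁) hN₁ hD hD₂
    have hgap : x - x * c / (c + x) ≤ 1 / c := by
      have hsq : x - x * c / (c + x) = x ^ 2 / (c + x) := by field_simp; ring
      rw [hsq, div_le_div_iff₀ (by positivity) hc]
      nlinarith [mul_le_mul hx1 hx1 hx0 zero_le_one]
    linarith

variable {μ : ℝ}

theorem mapsTo_aFun (hμ : -1 < μ) (n : ℕ) : MapsTo (aFun μ n) (Icc 0 1) (Icc 0 1) := by
  intro x ⟨hx0, hx1⟩
  have hc : (0 : ℝ) < ((n : ℝ) + 1) * (1 + μ) := mul_pos (by positivity) (by linarith)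
  have hD : 0 < Real.log (1 + 1 / (((n : ℝ) + 1) * (1 + μ))) :=
    Real.log_pos (by linarith [one_div_pos.mpr hc])
  refine ⟨div_nonneg (Real.log_nonneg (by linarith [div_nonneg hx0 hc.le])) hD.le,
    (div_le_one hD).mpr (Real.log_le_log (by positivity) ?_)⟩
  gcongr

theorem tendstoUniformlyOn_aFun (hμ : -1 < μ) :
    TendstoUniformlyOn (aFun μ) id atTop (Icc 0 1) := by
  refine tendstoUniformlyOn_of_dist_le (u := fun n => 1 / ((n : ℝ) + 1) / (1 + μ))
    (by simpa using tendsto_one_div_add_atTop_nhds_zero_nat.div_const (1 + μ)) fun n x hx => ?_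
  rw [div_div, dist_comm, Real.dist_eq]
  exact abs_log_div_log_sub_le (mul_pos (by positivity) (by linarith)) hx

theorem lnMu_pos {x : ℝ} (h : 0 < μ + x) : 0 < lnMu μ x :=
  Real.log_pos (by linarith)

theorem LK_eq_mul_kantorovich (n : ℕ) (f : ℝ → ℝ) (x : ℝ) :
    LK μ n f x = lnMu μ x * kantorovich n (fun t => f t / lnMu μ t) (aFun μ n x) := by
  simp only [LK, kantorovich, mul_assoc]

end Logarithmic

theorem stmt5 (μ : ℝ) (hμ : 0 < μ) (f : ℝ → ℝ)
    (hf : ContinuousOn f (Set.Icc 0 1)) :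
    Tendsto (fun n : ℕ => ⨆ x : Set.Icc (0:ℝ) 1, |LK μ n f (x : ℝ) - f (x : ℝ)|)
      atTop (nhds 0) := by
  have hμ' : -1 < μ := by linarith
  have hln₀ : ∀ x ∈ Icc (0 : ℝ) 1, lnMu μ x ≠ 0 := fun x hx => (lnMu_pos (by linarith [hx.1])).ne'
  have hln : ContinuousOn (lnMu μ) (Icc 0 1) :=
    (continuousOn_const.add continuousOn_id).log fun x hx => by dsimp; linarith [hx.1]
  set g := fun t => f t / lnMu μ t
  have hg : ContinuousOn g (Icc 0 1) := hf.div hln hln₀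
  have hKa : TendstoUniformlyOn (fun n x => kantorovich n g (aFun μ n x)) g atTop (Icc 0 1) :=
    (tendstoUniformlyOn_kantorovich hg).comp_of_mapsTo (mapsTo_aFun hμ')
      ((isCompact_Icc.uniformContinuousOn_of_continuous hg).comp_tendstoUniformlyOn_eventually
        (.of_forall fun n _ hx => mapsTo_aFun hμ' n hx) (fun _ hx => hx) (tendstoUniformlyOn_aFun hμ'))
  obtain ⟨M, hM⟩ := isCompact_Icc.exists_bound_of_continuousOn hln
  refine tendsto_iSup_abs_sub_of_tendstoUniformlyOn (F := fun n x => LK μ n f x) ?_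
  simp_rw [LK_eq_mul_kantorovich]
  exact (hKa.mul_left_of_norm_le hM).congr_right fun x hx => mul_div_cancel₀ _ (hln₀ x hx)
end

section
/- For every n ∈ ℕ with n > 1 and every y ∈ [0,1], one has ∑_{k=0}^{n} |y − k/(n+1)| · p_{n,k}(y) < √2 / √(n+1). -/
open MeasureTheory Filter Set

theorem stmt10 (n : ℕ) (hn : 1 < n) (y : ℝ) (hy : y ∈ Set.Icc (0:ℝ) 1) :
    ∑ k ∈ Finset.range (n + 1), |y - (k : ℝ) / ((n : ℝ) + 1)| * bern n k y <
      Real.sqrt 2 / Real.sqrt ((n : ℝ) + 1) := by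
  obtain ⟨hy0, hy1⟩ := hy
  have hnpos : (0:ℝ) < (n:ℝ) + 1 := by positivity
  have hbern : ∀ k, bern n k y = (bernsteinPolynomial ℝ n k).eval y := by
    intro k; simp [bern, bernsteinPolynomial]
  have hp : ∀ k, 0 ≤ bern n k y := by
    intro k
    have h1 : (0:ℝ) ≤ 1 - y := by linarith
    unfold bern; positivity
  -- moments
  have hS0 : ∑ k ∈ Finset.range (n+1), bern n k y = 1 := by
    have := congrArg (Polynomial.eval y) (bernsteinPolynomial.sum ℝ n)
    simpa [Polynomial.eval_finset_sum, hbern] using this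
  have hS1 : ∑ k ∈ Finset.range (n+1), (k:ℝ) * bern n k y = n * y := by
    have := congrArg (Polynomial.eval y) (bernsteinPolynomial.sum_smul ℝ n)
    simpa [Polynomial.eval_finset_sum, hbern] using this
  have hS2 : ∑ k ∈ Finset.range (n+1), (k:ℝ) * ((k:ℝ) - 1) * bern n k y
      = n * (n - 1) * y^2 := by
    have h := congrArg (Polynomial.eval y) (bernsteinPolynomial.sum_mul_smul ℝ n)
    simp only [Polynomial.eval_finset_sum, Polynomial.eval_smul, smul_eq_mul,
      Polynomial.eval_mul, Polynomial.eval_pow, Polynomial.eval_X, Polynomial.eval_natCast, nsmul_eq_mul] at h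
    have hterm : ∀ k ∈ Finset.range (n+1),
        ((k * (k-1) : ℕ) : ℝ) * (bernsteinPolynomial ℝ n k).eval y
        = (k:ℝ) * ((k:ℝ) - 1) * bern n k y := by
      intro k _
      rcases k with _ | k
      · simp
      · rw [hbern]; push_cast [Nat.succ_sub_one]; ring
    rw [Finset.sum_congr rfl hterm] at h
    rw [h]
    rcases n with _ | m
    · omega
    · push_cast [Nat.succ_sub_one]; ring
  -- second moment
  have hvar : ∑ k ∈ Finset.range (n+1), (y - (k:ℝ)/((n:ℝ)+1))^2 * bern n k y
      = ((1 - (n:ℝ)) * y^2 + n * y) / ((n:ℝ)+1)^2 := by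
    have hexp : ∀ k ∈ Finset.range (n+1),
        (y - (k:ℝ)/((n:ℝ)+1))^2 * bern n k y
        = y^2 * bern n k y - (2*y/((n:ℝ)+1)) * ((k:ℝ) * bern n k y)
          + (1/((n:ℝ)+1)^2) * ((k:ℝ) * ((k:ℝ)-1) * bern n k y + (k:ℝ) * bern n k y) := by
      intro k _
      field_simp
      ring
    rw [Finset.sum_congr rfl hexp]
    rw [Finset.sum_add_distrib, Finset.sum_sub_distrib, ← Finset.mul_sum, ← Finset.mul_sum,
      ← Finset.mul_sum, Finset.sum_add_distrib, hS1, hS2, hS0]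
    field_simp
    ring
  have hvar_lt : ∑ k ∈ Finset.range (n+1), (y - (k:ℝ)/((n:ℝ)+1))^2 * bern n k y
      < 2 / ((n:ℝ)+1) := by
    rw [hvar, div_lt_div_iff₀ (by positivity) hnpos]
    have hn1 : (1:ℝ) ≤ (n:ℝ) := by exact_mod_cast hn.le
    nlinarith [sq_nonneg y, sq_nonneg (1-y), mul_nonneg hy0 (sub_nonneg.2 hy1),
      mul_nonneg (mul_nonneg hy0 (sub_nonneg.2 hy1)) (sub_nonneg.2 hn1)]
  -- Cauchy-Schwarz
  have hCS : (∑ k ∈ Finset.range (n+1), |y - (k:ℝ)/((n:ℝ)+1)| * bern n k y)^2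
      ≤ (∑ k ∈ Finset.range (n+1), (y - (k:ℝ)/((n:ℝ)+1))^2 * bern n k y)
        * (∑ k ∈ Finset.range (n+1), bern n k y) := by
    apply Finset.sum_sq_le_sum_mul_sum_of_sq_eq_mul
    · intro k _; exact mul_nonneg (sq_nonneg _) (hp k)
    · intro k _; exact hp k
    · intro k _
      rw [mul_pow, sq_abs]; ring
  rw [hS0, mul_one] at hCS
  have hL : (0:ℝ) ≤ ∑ k ∈ Finset.range (n+1), |y - (k:ℝ)/((n:ℝ)+1)| * bern n k y := by
    apply Finset.sum_nonneg; intro k _; exact mul_nonneg (abs_nonneg _) (hp k)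
  have h2 : (∑ k ∈ Finset.range (n+1), |y - (k:ℝ)/((n:ℝ)+1)| * bern n k y)^2
      < (Real.sqrt 2 / Real.sqrt ((n:ℝ)+1))^2 := by
    rw [div_pow, Real.sq_sqrt (by norm_num : (0:ℝ) ≤ 2), Real.sq_sqrt hnpos.le]
    exact lt_of_le_of_lt hCS hvar_lt
  have hR : (0:ℝ) ≤ Real.sqrt 2 / Real.sqrt ((n:ℝ)+1) := by positivity
  nlinarith
end

section
/- Let μ > 0 and set ε_{n+1} := 1/((n+1)(1+μ)). Then, uniformly for x ∈ [0,1], a_{n+1}(x) − x = ε_{n+1} (x − x²)/2 + o(ε_{n+1}) as n → +∞; consequently γ_n := max_{x ∈ [0,1]} (a_{n+1}(x) − x) = O(1/n) as n → +∞. -/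
open MeasureTheory Filter Set

lemma log_quad (t : ℝ) (h0 : 0 ≤ t) (h1 : t ≤ 1/2) :
    |Real.log (1 + t) - (t - t ^ 2 / 2)| ≤ 2 * t ^ 3 := by
  have habs : |(-t : ℝ)| < 1 := by rw [abs_neg, abs_of_nonneg h0]; linarith
  have h := Real.abs_log_sub_add_sum_range_le habs 2
  have hsum : (∑ i ∈ Finset.range 2, (-t) ^ (i + 1) / (i + 1)) = -t + t ^ 2 / 2 := by
    simp [Finset.sum_range_succ]; ring
  rw [hsum] at h
  have h1t : (1 : ℝ) - |(-t : ℝ)| = 1 - t := by rw [abs_neg, abs_of_nonneg h0]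
  rw [h1t] at h
  have habs3 : |(-t : ℝ)| ^ 3 = t ^ 3 := by rw [abs_neg, abs_of_nonneg h0]
  rw [show (2:ℕ)+1 = 3 from rfl, habs3] at h
  have hden : t ^ 3 / (1 - t) ≤ 2 * t ^ 3 := by
    rw [div_le_iff₀ (by linarith)]
    nlinarith [pow_nonneg h0 3]
  have : |Real.log (1 + t) - (t - t ^ 2 / 2)| = |(-t + t ^ 2 / 2) + Real.log (1 - -t)| := by
    rw [show (1:ℝ) - -t = 1 + t by ring]
    congr 1; ring
  rw [this]; exact h.trans hden

set_option maxHeartbeats 1600000 in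
lemma core (ε x : ℝ) (hε0 : 0 < ε) (hε : ε ≤ 1/4) (hx0 : 0 ≤ x) (hx1 : x ≤ 1) :
    |Real.log (1 + ε * x) / Real.log (1 + ε) - x - ε * (x - x ^ 2) / 2| ≤ 10 * ε ^ 2 := by
  obtain ⟨R₁, hR₁def⟩ : ∃ r, Real.log (1 + ε * x) = ε * x - (ε * x) ^ 2 / 2 + r :=
    ⟨Real.log (1 + ε * x) - (ε * x - (ε * x) ^ 2 / 2), by ring⟩
  obtain ⟨R₂, hR₂def⟩ : ∃ r, Real.log (1 + ε) = ε - ε ^ 2 / 2 + r :=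
    ⟨Real.log (1 + ε) - (ε - ε ^ 2 / 2), by ring⟩
  have hεx0 : 0 ≤ ε * x := mul_nonneg hε0.le hx0
  have hεx : ε * x ≤ ε := mul_le_of_le_one_right hε0.le hx1
  have hε3 : 0 < ε ^ 3 := pow_pos hε0 3
  have hsq : ε ^ 2 ≤ ε / 4 := by nlinarith
  have hcube : ε ^ 3 ≤ ε / 16 := by nlinarith
  have hR₁ : |R₁| ≤ 2 * ε ^ 3 := by
    have h := log_quad (ε * x) hεx0 (by linarith)
    have heq : R₁ = Real.log (1 + ε * x) - (ε * x - (ε * x) ^ 2 / 2) := by linarith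
    rw [heq]
    refine h.trans ?_
    have : (ε * x) ^ 3 ≤ ε ^ 3 := pow_le_pow_left₀ hεx0 hεx 3
    linarith
  have hR₂ : |R₂| ≤ 2 * ε ^ 3 := by
    have h := log_quad ε hε0.le (by linarith)
    have heq : R₂ = Real.log (1 + ε) - (ε - ε ^ 2 / 2) := by linarith
    rw [heq]; exact h
  have hR₂' := abs_le.mp hR₂
  have hR₁' := abs_le.mp hR₁
  have hD : ε / 2 ≤ Real.log (1 + ε) := by rw [hR₂def]; nlinarith
  have hDpos : 0 < Real.log (1 + ε) := lt_of_lt_of_le (by linarith) hD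
  have hDne : ε - ε ^ 2 / 2 + R₂ ≠ 0 := by rw [← hR₂def]; exact hDpos.ne'
  have hxx : 0 ≤ x - x ^ 2 := by nlinarith
  have hxx' : x - x ^ 2 ≤ 1/4 := by nlinarith [sq_nonneg (x - 1/2)]
  have hnum : Real.log (1 + ε * x) - x * Real.log (1 + ε) -
      ε * (x - x ^ 2) / 2 * Real.log (1 + ε) =
      R₁ - x * R₂ + ε ^ 3 * (x - x ^ 2) / 4 - ε * (x - x ^ 2) / 2 * R₂ := by
    rw [hR₁def, hR₂def]; ring
  have heq2 : Real.log (1 + ε * x) / Real.log (1 + ε) - x - ε * (x - x ^ 2) / 2 =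
      (Real.log (1 + ε * x) - x * Real.log (1 + ε) -
        ε * (x - x ^ 2) / 2 * Real.log (1 + ε)) / Real.log (1 + ε) := by
    have hne := hDpos.ne'
    field_simp
  have h1 : |x * R₂| ≤ 2 * ε ^ 3 := by
    rw [abs_mul, abs_of_nonneg hx0]
    calc x * |R₂| ≤ 1 * (2 * ε ^ 3) :=
          mul_le_mul hx1 hR₂ (abs_nonneg _) one_pos.le
      _ = 2 * ε ^ 3 := one_mul _
  have h1' := abs_le.mp h1
  have h2 : ε ^ 3 * (x - x ^ 2) / 4 ≤ ε ^ 3 / 16 := by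
    have := mul_le_mul_of_nonneg_left hxx' hε3.le
    linarith
  have h2' : 0 ≤ ε ^ 3 * (x - x ^ 2) / 4 :=
    div_nonneg (mul_nonneg hε3.le hxx) (by norm_num)
  have h3 : |ε * (x - x ^ 2) / 2 * R₂| ≤ ε ^ 3 / 16 := by
    rw [abs_mul, abs_of_nonneg (div_nonneg (mul_nonneg hε0.le hxx) (by norm_num : (0:ℝ) ≤ 2))]
    calc ε * (x - x ^ 2) / 2 * |R₂| ≤ (ε / 8) * (2 * ε ^ 3) := by
          have hh : ε * (x - x ^ 2) ≤ ε * (1/4) := mul_le_mul_of_nonneg_left hxx' hε0.le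
          apply mul_le_mul (by linarith) hR₂ (abs_nonneg _) (by linarith)
      _ ≤ ε ^ 3 / 16 := by
          have h9 := mul_le_mul_of_nonneg_right hε hε3.le
          nlinarith [h9]
  have h3' := abs_le.mp h3
  have hnumb : |R₁ - x * R₂ + ε ^ 3 * (x - x ^ 2) / 4 - ε * (x - x ^ 2) / 2 * R₂| ≤ 5 * ε ^ 3 := by
    rw [abs_le]; constructor <;> linarith
  rw [heq2, hnum, abs_div, abs_of_pos hDpos]
  calc _ ≤ (5 * ε ^ 3) / (ε / 2) := by
        apply div_le_div₀ (by positivity) hnumb (by linarith) hD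
    _ = 10 * ε ^ 2 := by field_simp; ring

noncomputable def epsN (μ : ℝ) (n : ℕ) : ℝ := 1 / (((n : ℝ) + 1) * (1 + μ))

lemma epsN_def (μ : ℝ) (n : ℕ) : epsN μ n = 1 / (((n : ℝ) + 1) * (1 + μ)) := rfl

lemma epsN_pos (μ : ℝ) (hμ : 0 < μ) (n : ℕ) : 0 < epsN μ n := by
  rw [epsN_def]; positivity

lemma epsN_small (μ : ℝ) (hμ : 0 < μ) (n : ℕ) (hn : 3 ≤ n) : epsN μ n ≤ 1 / 4 := by
  rw [epsN_def]
  have h3 : (3:ℝ) ≤ (n:ℝ) := by exact_mod_cast hn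
  have h4 : (4:ℝ) ≤ ((n:ℝ) + 1) * (1 + μ) := by nlinarith
  exact one_div_le_one_div_of_le (by norm_num) h4

lemma key_est (μ : ℝ) (hμ : 0 < μ) (n : ℕ) (hn : 3 ≤ n) (x : ℝ) (hx0 : 0 ≤ x) (hx1 : x ≤ 1) :
    |(aFun μ n x - x) - epsN μ n * (x - x ^ 2) / 2| ≤ 10 * (epsN μ n) ^ 2 := by
  have h := core (epsN μ n) x (epsN_pos μ hμ n) (epsN_small μ hμ n hn) hx0 hx1
  have e1 : (1:ℝ) + x / (((n : ℝ) + 1) * (1 + μ)) = 1 + epsN μ n * x := by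
    rw [epsN_def]; ring
  have e2 : (1:ℝ) + 1 / (((n : ℝ) + 1) * (1 + μ)) = 1 + epsN μ n := by
    rw [epsN_def]
  have heq : aFun μ n x - x - epsN μ n * (x - x ^ 2) / 2 =
      Real.log (1 + epsN μ n * x) / Real.log (1 + epsN μ n) - x - epsN μ n * (x - x ^ 2) / 2 := by
    simp only [aFun, e1, e2]
  rw [heq]
  exact h

theorem stmt18 (μ : ℝ) (hμ : 0 < μ) :
    Tendsto (fun n : ℕ =>
        (⨆ x : Set.Icc (0:ℝ) 1,
          |(aFun μ n (x : ℝ) - (x : ℝ)) -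
            (1 / (((n : ℝ) + 1) * (1 + μ))) * ((x : ℝ) - (x : ℝ) ^ 2) / 2|) /
          (1 / (((n : ℝ) + 1) * (1 + μ)))) atTop (nhds 0) ∧
      ∃ C > (0:ℝ), ∃ N : ℕ, ∀ n ≥ N, gammaN μ n ≤ C / (n : ℝ) := by
  have hNE : Nonempty (Set.Icc (0:ℝ) 1) := ⟨⟨0, le_refl 0, zero_le_one⟩⟩
  have hS0 : ∀ n : ℕ, 0 ≤ ⨆ x : Set.Icc (0:ℝ) 1,
      |(aFun μ n (x : ℝ) - (x : ℝ)) - epsN μ n * ((x : ℝ) - (x : ℝ) ^ 2) / 2| :=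
    fun n => Real.iSup_nonneg (fun x => abs_nonneg _)
  have hS : ∀ n : ℕ, 3 ≤ n → (⨆ x : Set.Icc (0:ℝ) 1,
      |(aFun μ n (x : ℝ) - (x : ℝ)) - epsN μ n * ((x : ℝ) - (x : ℝ) ^ 2) / 2|) ≤
      10 * (epsN μ n) ^ 2 := by
    intro n hn
    exact ciSup_le fun x => key_est μ hμ n hn x x.2.1 x.2.2
  have hεto : Tendsto (fun n : ℕ => epsN μ n) atTop (nhds 0) := by
    have h1 : Tendsto (fun n : ℕ => ((n : ℝ) + 1) * (1 + μ)) atTop atTop := by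
      apply Tendsto.atTop_mul_const (by linarith : (0:ℝ) < 1 + μ)
      exact tendsto_atTop_add_const_right atTop 1 tendsto_natCast_atTop_atTop
    have h2 := h1.inv_tendsto_atTop
    have h3 : (fun n : ℕ => ((n : ℝ) + 1) * (1 + μ))⁻¹ = fun n : ℕ => epsN μ n := by
      funext n
      simp [Pi.inv_apply, epsN_def, one_div]
    rwa [h3] at h2
  constructor
  · simp only [← epsN_def]
    apply tendsto_of_tendsto_of_tendsto_of_le_of_le'
      (tendsto_const_nhds : Tendsto (fun _ : ℕ => (0:ℝ)) atTop (nhds 0))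
      (by simpa using hεto.const_mul 10)
    · exact Eventually.of_forall fun n => div_nonneg (hS0 n) (epsN_pos μ hμ n).le
    · filter_upwards [eventually_ge_atTop 3] with n hn
      rw [div_le_iff₀ (epsN_pos μ hμ n)]
      calc (⨆ x : Set.Icc (0:ℝ) 1,
            |(aFun μ n (x : ℝ) - (x : ℝ)) - epsN μ n * ((x : ℝ) - (x : ℝ) ^ 2) / 2|) ≤
          10 * (epsN μ n) ^ 2 := hS n hn
        _ = 10 * epsN μ n * epsN μ n := by ring
  · refine ⟨3, by norm_num, 3, fun n hn => ?_⟩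
    have hnpos : (0:ℝ) < (n : ℝ) := by
      have : (3:ℝ) ≤ (n:ℝ) := by exact_mod_cast hn
      linarith
    have hεn : epsN μ n ≤ 1 / (n : ℝ) := by
      rw [epsN_def]
      apply one_div_le_one_div_of_le hnpos
      nlinarith
    have hε4 := epsN_small μ hμ n hn
    have hεp := epsN_pos μ hμ n
    rw [gammaN]
    apply ciSup_le
    intro x
    have hb := key_est μ hμ n hn x x.2.1 x.2.2
    have hxx : 0 ≤ (x:ℝ) - (x:ℝ) ^ 2 := by nlinarith [x.2.1, x.2.2]
    have hxx' : (x:ℝ) - (x:ℝ) ^ 2 ≤ 1/4 := by nlinarith [sq_nonneg ((x:ℝ) - 1/2)]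
    have hbb : epsN μ n * ((x:ℝ) - (x:ℝ) ^ 2) / 2 ≤ epsN μ n / 8 := by
      have := mul_le_mul_of_nonneg_left hxx' hεp.le
      linarith
    have hbb0 : 0 ≤ epsN μ n * ((x:ℝ) - (x:ℝ) ^ 2) / 2 :=
      div_nonneg (mul_nonneg hεp.le hxx) (by norm_num)
    have htri : |aFun μ n (x:ℝ) - (x:ℝ)| ≤
        |(aFun μ n (x:ℝ) - (x:ℝ)) - epsN μ n * ((x:ℝ) - (x:ℝ) ^ 2) / 2| +
          |epsN μ n * ((x:ℝ) - (x:ℝ) ^ 2) / 2| := by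
      have := abs_add_le ((aFun μ n (x:ℝ) - (x:ℝ)) - epsN μ n * ((x:ℝ) - (x:ℝ) ^ 2) / 2)
        (epsN μ n * ((x:ℝ) - (x:ℝ) ^ 2) / 2)
      simpa using this
    have hsq : 10 * (epsN μ n) ^ 2 ≤ 10 * (1/4) * epsN μ n := by
      have := mul_le_mul_of_nonneg_right hε4 hεp.le
      nlinarith
    calc |aFun μ n (x:ℝ) - (x:ℝ)| ≤ 10 * (epsN μ n) ^ 2 + epsN μ n / 8 := by
          rw [abs_of_nonneg hbb0] at htri
          linarith
      _ ≤ 3 * epsN μ n := by linarith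
      _ ≤ 3 / (n:ℝ) := by
          rw [div_eq_mul_one_div 3 (n:ℝ)]
          exact mul_le_mul_of_nonneg_left hεn (by norm_num)
end
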